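/- arXiv:1712.03788 — 4 statements merged into one kernel-verified Lean document; each statement's English description precedes it below -/
import Mathlib

section
/- For every integer m ≥ 4, the system of three polynomial equations in real unknowns a_{12}, a_{22}: (i) -(m(m-1)/2) a_{22} - m a_{12} = 0; (ii) (1/24)(m-2)(3m³a_{22}² - 4m²a_{22}(1 + a_{22} - 3a_{12}) + 12a_{12}(-1 + a_{22} + a_{12}) + m(4a_{22} + a_{22}² + 12(-1 + a_{12})a_{12})) = 0; (iii) -(1/48)(m-3)(m-2)(m⁴a_{22}³ - 2m³a_{22}²(2 + a_{22} - 3a_{12}) + 8a_{12}(4 - 5a_{22} + a_{22}² - 6a_{12} + 3a_{22}a_{12} + 2a_{12}²) + m²a_{22}(4 + 6a_{22} + a_{22}² - 20a_{12} - 2a_{22}a_{12} + 12a_{12}²) + 2m(a_{22}²(-1 + 6a_{12}) + 4a_{12}(2 - 3a_{12} + a_{12}²) + a_{22}(-2 - 6a_{12} + 6a_{12}²))) = 0, has no real solution with a_{12} ≠ 0. -/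
theorem stmt_6 (m : ℕ) (hm : 4 ≤ m) :
    ¬ ∃ a12 a22 : ℝ, a12 ≠ 0 ∧
      -((m : ℝ) * ((m : ℝ) - 1) / 2) * a22 - (m : ℝ) * a12 = 0 ∧
      (1 / 24 : ℝ) * ((m : ℝ) - 2) *
        (3 * (m : ℝ) ^ 3 * a22 ^ 2 - 4 * (m : ℝ) ^ 2 * a22 * (1 + a22 - 3 * a12)
          + 12 * a12 * (-1 + a22 + a12)
          + (m : ℝ) * (4 * a22 + a22 ^ 2 + 12 * (-1 + a12) * a12)) = 0 ∧
      -(1 / 48 : ℝ) * ((m : ℝ) - 3) * ((m : ℝ) - 2) *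
        ((m : ℝ) ^ 4 * a22 ^ 3 - 2 * (m : ℝ) ^ 3 * a22 ^ 2 * (2 + a22 - 3 * a12)
          + 8 * a12 * (4 - 5 * a22 + a22 ^ 2 - 6 * a12 + 3 * a22 * a12 + 2 * a12 ^ 2)
          + (m : ℝ) ^ 2 * a22 * (4 + 6 * a22 + a22 ^ 2 - 20 * a12 - 2 * a22 * a12 + 12 * a12 ^ 2)
          + 2 * (m : ℝ) * (a22 ^ 2 * (-1 + 6 * a12) + 4 * a12 * (2 - 3 * a12 + a12 ^ 2)
            + a22 * (-2 - 6 * a12 + 6 * a12 ^ 2))) = 0 := by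
  rintro ⟨a12, a22, ha, e1, e2, e3⟩
  set M : ℝ := (m : ℝ) with hMdef
  have hM : (4 : ℝ) ≤ M := by rw [hMdef]; exact_mod_cast hm
  have p1 : (0 : ℝ) < M := by linarith
  have p2 : (0 : ℝ) < M - 1 := by linarith
  have p3 : (0 : ℝ) < M - 2 := by linarith
  have p4 : (0 : ℝ) < M - 3 := by linarith
  have p5 : (0 : ℝ) < M + 1 := by linarith
  have h0 : M * ((M - 1) * a22 + 2 * a12) = 0 := by linear_combination (-2 : ℝ) * e1
  have h1 : (M - 1) * a22 + 2 * a12 = 0 := by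
    rcases mul_eq_zero.mp h0 with h | h
    · exact absurd h p1.ne'
    · exact h
  have h2 : (M - 1) * (M - 2) * a12 * ((M - 1) * (M + 3) + (M + 9) * a12) = 0 := by
    linear_combination (-6 * (M - 1) ^ 2) * e2 + (((3 : ℝ)/4) * M^5 * a22 + ((3 : ℝ)/2) * M^4 * a12 + ((-13 : ℝ)/4) * M^4 * a22 + (-1 : ℝ) * M^4 + (-4 : ℝ) * M^3 * a12 + ((19 : ℝ)/4) * M^3 * a22 + (4 : ℝ) * M^3 + ((9 : ℝ)/2) * M^2 * a12 + ((-11 : ℝ)/4) * M^2 * a22 + (-5 : ℝ) * M^2 + (-8 : ℝ) * M * a12 + ((1 : ℝ)/2) * M * a22 + (2 : ℝ) * M + (6 : ℝ) * a12) * h1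
  have key : (M - 1) * (M + 3) + (M + 9) * a12 = 0 := by
    rcases mul_eq_zero.mp h2 with h | h
    · rcases mul_eq_zero.mp h with h' | h'
      · rcases mul_eq_zero.mp h' with h'' | h''
        · exact absurd h'' p2.ne'
        · exact absurd h'' p3.ne'
      · exact absurd h' ha
    · exact h
  have h3 : 48 * M * (M - 1) ^ 3 * (M - 2) * (M - 3) * (M + 1) * a12 = 0 := by
    linear_combination (-48 * (M + 9) ^ 2 * (M - 1) ^ 3) * e3 + ((-1 : ℝ) * M^10 * a22^2 + (-4 : ℝ) * M^9 * a12 * a22 + (-9 : ℝ) * M^9 * a22^2 + (4 : ℝ) * M^9 * a22 + (-4 : ℝ) * M^8 * a12^2 + (-44 : ℝ) * M^8 * a12 * a22 + (12 : ℝ) * M^8 * a12 + (49 : ℝ) * M^8 * a22^2 + (38 : ℝ) * M^8 * a22 + (-4 : ℝ) * M^8 + (-48 : ℝ) * M^7 * a12^2 + (100 : ℝ) * M^7 * a12 * a22 + (148 : ℝ) * M^7 * a12 + (211 : ℝ) * M^7 * a22^2 + (-176 : ℝ) * M^7 * a22 + (-40 : ℝ) * M^7 + (76 : ℝ) * M^6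 * a12^2 + (972 : ℝ) * M^6 * a12 * a22 + (-120 : ℝ) * M^6 * a12 + (-1605 : ℝ) * M^6 * a22^2 + (-922 : ℝ) * M^6 * a22 + (156 : ℝ) * M^6 + (1360 : ℝ) * M^5 * a12^2 + (-4060 : ℝ) * M^5 * a12 * a22 + (-3344 : ℝ) * M^5 * a12 + (3701 : ℝ) * M^5 * a22^2 + (5920 : ℝ) * M^5 * a22 + (1000 : ℝ) * M^5 + (-2844 : ℝ) * M^4 * a12^2 + (8636 : ℝ) * M^4 * a12 * a22 + (7356 : ℝ) * M^4 * a12 + (-4101 : ℝ) * M^4 * a22^2 + (-12094 : ℝ) * M^4 * a22 + (-5420 : ℝ) * M^4 + (-2224 : ℝ) * M^3 * a12^2 + (-12644 : ℝ) * M^3 * a12 * a22 + (-9116 : ℝ) * M^3 * a12 + (2241 : ℝ) * M^3 * a22^2 + (11712 : ℝ) * M^3 * a22 + (9384 : ℝ) * M^3 + (-2364 : ℝ) * M^2 * a12^2 + (6612 : ℝ) * M^2 * a12 * a22 + (28608 : ℝ) * M^2 * a12 + (-486 : ℝ) * M^2 * a22^2 + (-5454 : ℝ) * M^2 * a22 +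 (-7020 : ℝ) * M^2 + (25488 : ℝ) * M * a12^2 + (4320 : ℝ) * M * a12 * a22 + (-42984 : ℝ) * M * a12 + (972 : ℝ) * M * a22 + (1944 : ℝ) * M + (-19440 : ℝ) * a12^2 + (-3888 : ℝ) * a12 * a22 + (19440 : ℝ) * a12) * h1 + ((-8 : ℝ) * M^6 * a12 + (-48 : ℝ) * M^5 * a12 + (-96 : ℝ) * M^4 * a12^2 + (-272 : ℝ) * M^4 * a12 + (-288 : ℝ) * M^3 * a12^2 + (4416 : ℝ) * M^3 * a12 + (4128 : ℝ) * M^2 * a12^2 + (-12968 : ℝ) * M^2 * a12 + (-8928 : ℝ) * M * a12^2 + (14064 : ℝ) * M * a12 + (5184 : ℝ) * a12^2 + (-5184 : ℝ) * a12) * key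
  have hpos : (0 : ℝ) < 48 * M * (M - 1) ^ 3 * (M - 2) * (M - 3) * (M + 1) :=
    mul_pos (mul_pos (mul_pos (mul_pos (mul_pos (by norm_num : (0:ℝ) < 48) p1)
      (pow_pos p2 3)) p3) p4) p5
  rcases mul_eq_zero.mp h3 with h | h
  · exact absurd h hpos.ne'
  · exact ha h
end

section
/- The recursion β̃_{n+1} = β̃_n + (1 - n a_{22} - a_{12}) α̃_n for n ≥ 4, where α̃_n = -(n(n-1)/2) a_{22} - n a_{12}, with initial value β̃_4 = 11a_{22}² + 5(-1 + a_{12})a_{12} + a_{22}(-4 + 17a_{12}), has the closed-form solution β̃_n = (1/24)(n-2)(3n³a_{22}² - 4n²a_{22}(1 + a_{22} - 3a_{12}) + 12a_{12}(-1 + a_{22} + a_{12}) + n(4a_{22} + a_{22}² + 12(-1 + a_{12})a_{12})). -/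
theorem stmt_8 (a12 a22 : ℝ) (β : ℕ → ℝ)
    (h4 : β 4 = 11 * a22 ^ 2 + 5 * (-1 + a12) * a12 + a22 * (-4 + 17 * a12))
    (hrec : ∀ n : ℕ, 4 ≤ n →
      β (n + 1) = β n + (1 - (n : ℝ) * a22 - a12) *
        (-((n : ℝ) * ((n : ℝ) - 1) / 2) * a22 - (n : ℝ) * a12)) :
    ∀ n : ℕ, 4 ≤ n →
      β n = (1 / 24 : ℝ) * ((n : ℝ) - 2) *
        (3 * (n : ℝ) ^ 3 * a22 ^ 2 - 4 * (n : ℝ) ^ 2 * a22 * (1 + a22 - 3 * a12)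
          + 12 * a12 * (-1 + a22 + a12)
          + (n : ℝ) * (4 * a22 + a22 ^ 2 + 12 * (-1 + a12) * a12)) := by
  intro n hn
  induction n, hn using Nat.le_induction with
  | base => rw [h4]; norm_num; ring
  | succ n hn ih =>
    rw [hrec n hn, ih]
    push_cast
    ring
end

section
/- For an integer n ≥ 3, if real numbers a_{11}, a_{21} with a_{11} ≠ 0 satisfy both -(n(n-1)/2)a_{11} - n a_{21} = 0 and (1/24)n(-8a_{11} + 12n a_{11} - 4n²a_{11} - 2a_{11}² + 9n a_{11}² - 10n²a_{11}² + 3n³a_{11}² + 12a_{21} - 12n a_{21} + 12a_{11}a_{21} - 24n a_{11}a_{21} + 12n²a_{11}a_{21} - 12a_{21}² + 12n a_{21}²) = 0, then a_{11} = 2 and a_{21} = 1 - n. -/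
theorem stmt_10 (n : ℕ) (hn : 3 ≤ n) (a11 a21 : ℝ) (ha : a11 ≠ 0)
    (h1 : -((n : ℝ) * ((n : ℝ) - 1) / 2) * a11 - (n : ℝ) * a21 = 0)
    (h2 : (1 / 24 : ℝ) * (n : ℝ) *
      (-8 * a11 + 12 * (n : ℝ) * a11 - 4 * (n : ℝ) ^ 2 * a11 - 2 * a11 ^ 2
        + 9 * (n : ℝ) * a11 ^ 2 - 10 * (n : ℝ) ^ 2 * a11 ^ 2 + 3 * (n : ℝ) ^ 3 * a11 ^ 2
        + 12 * a21 - 12 * (n : ℝ) * a21 + 12 * a11 * a21 - 24 * (n : ℝ) * a11 * a21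
        + 12 * (n : ℝ) ^ 2 * a11 * a21 - 12 * a21 ^ 2 + 12 * (n : ℝ) * a21 ^ 2) = 0) :
    a11 = 2 ∧ a21 = 1 - (n : ℝ) := by
  have hN : (3 : ℝ) ≤ (n : ℝ) := by exact_mod_cast hn
  have hn0 : (n : ℝ) ≠ 0 := by linarith
  have ha21 : a21 = (1 - (n : ℝ)) / 2 * a11 := by
    apply mul_left_cancel₀ hn0
    linear_combination -h1
  have hfac : (n : ℝ) / 24 * ((n : ℝ) ^ 2 - 1) * a11 * (2 - a11) = 0 := by
    rw [ha21] at h2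
    linear_combination h2
  have hsq : (n : ℝ) ^ 2 - 1 ≠ 0 := by nlinarith
  have h24 : (n : ℝ) / 24 ≠ 0 := by positivity
  have h2a : 2 - a11 = 0 := by
    rcases mul_eq_zero.1 hfac with h | h
    · rcases mul_eq_zero.1 h with h | h
      · rcases mul_eq_zero.1 h with h | h
        · exact absurd h h24
        · exact absurd h hsq
      · exact absurd h ha
    · exact h
  have ha2 : a11 = 2 := by linarith
  exact ⟨ha2, by rw [ha21, ha2]; ring⟩
end

section
/- Let g be a Lie algebra with elements P₁, P₂, set T₁ = [P₁,P₂], T₂ = [P₁,T₁], T₃ = [P₁,T₂], T₄ = [P₁,T₃], R₂ = [P₂,T₁], and define W₄ = [P₂,T₃], W₅ = [P₂,W₄]. If R₂ = 0, then W₄ = -[T₁,T₂] and W₅ = 0. -/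
theorem stmt_14 {K : Type*} [Field K] {g : Type*} [LieRing g] [LieAlgebra K g]
    (P₁ P₂ : g)
    (T₁ T₂ T₃ : g) (hT1 : T₁ = ⁅P₁, P₂⁆) (hT2 : T₂ = ⁅P₁, T₁⁆) (hT3 : T₃ = ⁅P₁, T₂⁆)
    (hR2 : ⁅P₂, T₁⁆ = 0) :
    ⁅P₂, T₃⁆ = -⁅T₁, T₂⁆ ∧ ⁅P₂, ⁅P₂, T₃⁆⁆ = 0 := by
  have hPP : ⁅P₂, P₁⁆ = -T₁ := by rw [hT1, lie_skew]
  have h2 : ⁅P₂, T₂⁆ = 0 := by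
    rw [hT2, leibniz_lie, hPP, hR2, lie_zero, add_zero, neg_lie, lie_self, neg_zero]
  have h4 : ⁅P₂, T₃⁆ = -⁅T₁, T₂⁆ := by
    rw [hT3, leibniz_lie, hPP, h2, lie_zero, add_zero, neg_lie]
  refine ⟨h4, ?_⟩
  rw [h4, lie_neg, leibniz_lie, hR2, h2, zero_lie, lie_zero, add_zero, neg_zero]
end
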